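/- For all m > n ≥ 1, write x_1 x_2 ⋯ x_h = E_{2,m−n} if n is even and x_1 x_2 ⋯ x_h = the letterwise complement of E_{2,m−n} (exchanging a and b) if n is odd, where h = |E_{2,m−n}| = 3·2^{m−n−1} − 1. Then E_{2,m} = E_{1,n} x_1 E_{1,n} x_2 E_{1,n} ⋯ E_{1,n} x_h E_{1,n}, a concatenation of 3·2^{m−n−1} copies of E_{1,n} separated by the single letters x_1, …, x_h. -/
import Mathlib


/-- The alphabet: letters a, b (for the period-doubling sequence) and c (used by Θ₂). -/
inductive Letter : Type
  | a | b | c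
deriving DecidableEq, Repr

open Letter

/-- The period-doubling substitution σ : a ↦ ab, b ↦ aa, extended to words
(the extra letter c is left untouched; it is never produced). -/
def sigmaw : List Letter → List Letter :=
  fun w => w.flatMap fun x => match x with
    | .a => [.a, .b]
    | .b => [.a, .a]
    | .c => [.c]

/-- A_m = σ^m(a). -/
def A (m : ℕ) : List Letter := sigmaw^[m] [.a]

/-- B_m = σ^m(b). -/
def B (m : ℕ) : List Letter := sigmaw^[m] [.b]

/-- δ_m, the last letter of A_m. -/
def delta (m : ℕ) : Letter := (A m).getLastD .a

/-- The period-doubling sequence D, as a function giving its (n+1)-st letter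
(0-indexed); it is the fixed point of σ beginning with a, and A_{n+1} is a
prefix of it of length 2^{n+1} > n. -/
def D (n : ℕ) : Letter := (A (n + 1)).getD n .a

/-- The finite segment D[i .. i+len−1] of the period-doubling sequence,
with 1-based starting position i. -/
def Dseg (i len : ℕ) : List Letter := (List.range len).map fun k => D (i - 1 + k)

/-- u occurs in the finite word w at (1-based) position i. -/
def OccursAt {α : Type*} (u w : List α) (i : ℕ) : Prop :=
  1 ≤ i ∧ i - 1 + u.length ≤ w.length ∧ (w.drop (i - 1)).take u.length = u

/-- u is a factor of the finite word w. -/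
def IsFactor {α : Type*} (u w : List α) : Prop := ∃ i, OccursAt u w i

/-- u occurs in the period-doubling sequence D at (1-based) position i. -/
def DOccursAt (u : List Letter) (i : ℕ) : Prop := 1 ≤ i ∧ Dseg i u.length = u

/-- u is a factor of the period-doubling sequence D. -/
def FactorD (u : List Letter) : Prop := ∃ i, DOccursAt u i

/-- L(u,p): the starting position of the p-th occurrence (p ≥ 1) of u in D. -/
noncomputable def L (u : List Letter) (p : ℕ) : ℕ := Nat.nth (DOccursAt u) (p - 1)

/-- r_p(u): the p-th return word of u (p ≥ 1), i.e. D[L(u,p) .. L(u,p+1)−1];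
r_0(u) is the prefix of D preceding the first occurrence of u. -/
noncomputable def r (u : List Letter) (p : ℕ) : List Letter :=
  if p = 0 then Dseg 1 (L u 1 - 1) else Dseg (L u p) (L u (p + 1) - L u p)

/-- The morphism τ₁ : a ↦ a, b ↦ bb, extended to words. -/
def tau1 : List Letter → List Letter :=
  fun w => w.flatMap fun x => match x with
    | .a => [.a]
    | .b => [.b, .b]
    | .c => [.c]

/-- The morphism τ₂ : a ↦ ab, b ↦ acac, extended to words. -/
def tau2 : List Letter → List Letter :=
  fun w => w.flatMap fun x => match x with
    | .a => [.a, .b]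
    | .b => [.a, .c, .a, .c]
    | .c => [.c]

/-- Θ₁[p], the p-th letter (p ≥ 1) of Θ₁ = τ₁(D): since |τ₁(w)| ≥ |w|, the p-th
letter of Θ₁ is the p-th letter of the image of the length-p prefix of D. -/
def Theta1 (p : ℕ) : Letter := (tau1 (Dseg 1 p)).getD (p - 1) .a

/-- Θ₂[p], the p-th letter (p ≥ 1) of Θ₂ = τ₂(D). -/
def Theta2 (p : ℕ) : Letter := (tau2 (Dseg 1 p)).getD (p - 1) .a

/-- The envelope word E_{1,m} = A_m with its last letter δ_m deleted. -/
def E1 (m : ℕ) : List Letter := (A m).dropLast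

/-- The envelope word E_{2,m} = B_m B_{m−1} with its last letter δ_m deleted. -/
def E2 (m : ℕ) : List Letter := (B m ++ B (m - 1)).dropLast

/-- Enumeration of the envelope words in the order
E_{1,1} ⊏ E_{2,1} ⊏ E_{1,2} ⊏ E_{2,2} ⊏ …. -/
def Eword (k : ℕ) : List Letter := if k % 2 = 0 then E1 (k / 2 + 1) else E2 (k / 2 + 1)

/-- Env(u): the ⊏-least envelope word having u as a factor. -/
noncomputable def Env (u : List Letter) : List Letter :=
  Eword (sInf {k | IsFactor u (Eword k)})

/-- The letterwise complement exchanging a and b. -/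
def comp : Letter → Letter
  | .a => .b
  | .b => .a
  | .c => .c


/-- The last letter of A n. -/
def dl (n : ℕ) : Letter := if n % 2 = 0 then .a else .b

/-- The letter map induced on separators by σ^n. -/
def g (n : ℕ) : Letter → Letter
  | .a => dl n
  | .b => comp (dl n)
  | .c => .c

lemma comp_comp (x : Letter) : comp (comp x) = x := by cases x <;> rfl

lemma dl_succ (n : ℕ) : dl (n + 1) = comp (dl n) := by
  rcases Nat.mod_two_eq_zero_or_one n with h | h <;>
    simp [dl, Nat.add_mod, h, comp]

lemma dl_ne_c (n : ℕ) : dl n ≠ Letter.c := by unfold dl; split <;> simp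

lemma sigmaw_append (u v : List Letter) : sigmaw (u ++ v) = sigmaw u ++ sigmaw v := by
  simp [sigmaw]

lemma sigmaw_iter_append (n : ℕ) (u v : List Letter) :
    sigmaw^[n] (u ++ v) = sigmaw^[n] u ++ sigmaw^[n] v := by
  induction n generalizing u v with
  | zero => simp
  | succ n ih => rw [Function.iterate_succ_apply, Function.iterate_succ_apply,
      Function.iterate_succ_apply, sigmaw_append, ih]

lemma A_succ (n : ℕ) : A (n + 1) = A n ++ B n := by
  rw [A, Function.iterate_succ_apply]
  rw [show sigmaw [Letter.a] = [Letter.a] ++ [Letter.b] from rfl, sigmaw_iter_append]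
  rfl

lemma B_succ (n : ℕ) : B (n + 1) = A n ++ A n := by
  rw [B, Function.iterate_succ_apply]
  rw [show sigmaw [Letter.b] = [Letter.a] ++ [Letter.a] from rfl, sigmaw_iter_append]
  rfl

lemma A_eq_B_eq (n : ℕ) : A n = E1 n ++ [dl n] ∧ B n = E1 n ++ [comp (dl n)] := by
  induction n with
  | zero => constructor <;> rfl
  | succ n ih =>
    obtain ⟨hA, hB⟩ := ih
    have hE : E1 (n + 1) = A n ++ E1 n := by
      rw [E1, A_succ]
      conv_lhs => rw [hB]
      rw [← List.append_assoc, List.dropLast_concat]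
    constructor
    · rw [A_succ, hB, hE, dl_succ]
      simp only [List.append_assoc]
    · rw [B_succ, hE, dl_succ, comp_comp, hA]
      simp only [List.append_assoc]

lemma noc_sigmaw {w : List Letter} (h : Letter.c ∉ w) : Letter.c ∉ sigmaw w := by
  intro hc
  simp only [sigmaw, List.mem_flatMap] at hc
  obtain ⟨x, hx, hcx⟩ := hc
  cases x <;> simp_all

lemma noc_B (n : ℕ) : Letter.c ∉ B n := by
  induction n with
  | zero => simp [B]
  | succ n ih =>
    rw [B, Function.iterate_succ_apply']
    exact noc_sigmaw ih

lemma sigma_step (n : ℕ) (w : List Letter) (hw : Letter.c ∉ w) :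
    (sigmaw w).flatMap (fun x => E1 n ++ [g n x]) =
      w.flatMap (fun x => E1 (n + 1) ++ [g (n + 1) x]) := by
  induction w with
  | nil => rfl
  | cons x w ihw =>
    simp only [List.mem_cons, not_or] at hw
    have hsplit : sigmaw (x :: w) = sigmaw [x] ++ sigmaw w := by
      simp [sigmaw]
    rw [hsplit, List.flatMap_append, ihw hw.2, List.flatMap_cons]
    congr 1
    obtain ⟨hAn, hBn⟩ := A_eq_B_eq n
    obtain ⟨hAn1, hBn1⟩ := A_eq_B_eq (n + 1)
    cases x with
    | a =>
      show (E1 n ++ [g n Letter.a]) ++ ((E1 n ++ [g n Letter.b]) ++ []) = _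
      rw [List.append_nil]
      show (E1 n ++ [dl n]) ++ (E1 n ++ [comp (dl n)]) = E1 (n + 1) ++ [g (n + 1) Letter.a]
      rw [← hAn, ← hBn, ← A_succ]
      show A (n + 1) = E1 (n + 1) ++ [dl (n + 1)]
      exact hAn1
    | b =>
      show (E1 n ++ [g n Letter.a]) ++ ((E1 n ++ [g n Letter.a]) ++ []) = _
      rw [List.append_nil]
      show (E1 n ++ [dl n]) ++ (E1 n ++ [dl n]) = E1 (n + 1) ++ [g (n + 1) Letter.b]
      rw [← hAn, ← B_succ]
      show B (n + 1) = E1 (n + 1) ++ [comp (dl (n + 1))]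
      exact hBn1
    | c => exact absurd rfl hw.1

lemma sigma_iter_eq (n : ℕ) (w : List Letter) (hw : Letter.c ∉ w) :
    sigmaw^[n] w = w.flatMap (fun x => E1 n ++ [g n x]) := by
  induction n generalizing w with
  | zero =>
    show w = _
    rw [show E1 0 = [] from rfl]
    induction w with
    | nil => rfl
    | cons x w ihw =>
      simp only [List.mem_cons, not_or] at hw
      rw [List.flatMap_cons, ← ihw hw.2]
      cases x with
      | a => rfl
      | b => rfl
      | c => exact absurd rfl hw.1
  | succ n ih =>
    rw [Function.iterate_succ_apply, ih (sigmaw w) (noc_sigmaw hw), sigma_step n w hw]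

lemma shuffle (f : Letter → Letter) (e : List Letter) (L : List Letter) :
    L.flatMap (fun x => e ++ [f x]) ++ e = e ++ L.flatMap (fun x => f x :: e) := by
  induction L with
  | nil => simp
  | cons x L ih =>
    rw [List.flatMap_cons, List.flatMap_cons, List.append_assoc, ih]
    simp


/-- For all m > n ≥ 1, letting x₁x₂⋯x_h be E_{2,m−n} if n is even and
the letterwise complement of E_{2,m−n} if n is odd (so h = 3·2^{m−n−1} − 1),
E_{2,m} = E_{1,n} x₁ E_{1,n} x₂ E_{1,n} ⋯ E_{1,n} x_h E_{1,n}. -/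
theorem E2_decomposition (m n : ℕ) (hn : 1 ≤ n) (hnm : n < m) :
    E2 m = E1 n ++
      (if n % 2 = 0 then E2 (m - n) else (E2 (m - n)).map comp).flatMap
        (fun x => x :: E1 n) := by
  set k := m - n with hk
  have hk1 : 1 ≤ k := by omega
  have hm : m = n + k := by omega
  obtain ⟨hAk1, hBk1⟩ := A_eq_B_eq (k - 1)
  have hdlk : comp (dl (k - 1)) = dl k := by
    have h := dl_succ (k - 1)
    rw [show k - 1 + 1 = k from by omega] at h
    rw [h]
  have h1 : B k ++ B (k - 1) = (B k ++ E1 (k - 1)) ++ [dl k] := by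
    rw [hBk1, hdlk, List.append_assoc]
  have hE2k : E2 k = B k ++ E1 (k - 1) := by
    rw [E2, h1, List.dropLast_concat]
  have hc : Letter.c ∉ E2 k ++ [dl k] := by
    rw [hE2k, List.append_assoc, ← hdlk, ← hBk1]
    simp only [List.mem_append, not_or]
    exact ⟨noc_B k, noc_B (k - 1)⟩
  have hBm : B m = sigmaw^[n] (B k) := by
    rw [hm, B, Function.iterate_add_apply]; rfl
  have hBm1 : B (m - 1) = sigmaw^[n] (B (k - 1)) := by
    rw [show m - 1 = n + (k - 1) from by omega, B, Function.iterate_add_apply]; rfl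
  have hmain : B m ++ B (m - 1) = sigmaw^[n] (E2 k ++ [dl k]) := by
    rw [hBm, hBm1, ← sigmaw_iter_append, h1, hE2k]
  have hiter := sigma_iter_eq n (E2 k ++ [dl k]) hc
  rw [List.flatMap_append] at hiter
  have hsingle : ([dl k]).flatMap (fun x => E1 n ++ [g n x]) = E1 n ++ [g n (dl k)] := by
    simp
  rw [hsingle] at hiter
  have hE2m : E2 m = (E2 k).flatMap (fun x => E1 n ++ [g n x]) ++ E1 n := by
    rw [E2, hmain, hiter, ← List.append_assoc, List.dropLast_concat]
  rw [hE2m, shuffle (g n) (E1 n) (E2 k)]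
  congr 1
  rcases Nat.mod_two_eq_zero_or_one n with hpar | hpar
  · rw [if_pos hpar]
    have hg : ∀ x, g n x = x := by intro x; cases x <;> simp [g, dl, hpar, comp]
    simp only [hg]
  · rw [if_neg (by omega), List.flatMap_map]
    have hg : ∀ x, g n x = comp x := by
      intro x; cases x <;> simp [g, dl, hpar, comp]
    simp only [hg]
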